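/- Let v : ℝ × S¹ → ℝ³ be a smooth solution of ∂_τ v = (1/2)v + (v'×(v''×v'))/|v'|⁴ with v' ≠ 0 and v''×v' ≠ 0 everywhere, and define E(τ) = ∫_{S¹} e^{−|v|²/4}|v'| dx and Π(τ) = (1/4)∫_{S¹}|v·γ|² e^{−|v|²/4}|v'| dx with γ the unit binormal. Then Π(τ) ≤ −E'(τ) for all τ. -/

import Mathlib

open Real MeasureTheory intervalIntegral

noncomputable section

abbrev E3 := EuclideanSpace ℝ (Fin 3)

/-- The cross product on `ℝ³`. -/
def cross (a b : E3) : E3 :=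
  (WithLp.equiv 2 (Fin 3 → ℝ)).symm
    ![a 1 * b 2 - a 2 * b 1, a 2 * b 0 - a 0 * b 2, a 0 * b 1 - a 1 * b 0]

/-- The dot product on `ℝ³`. -/
def dot (a b : E3) : ℝ := a 0 * b 0 + a 1 * b 1 + a 2 * b 2

lemma dot_eq_inner (a b : E3) : dot a b = (inner ℝ a b : ℝ) := by
  simp [dot, PiLp.inner_apply, Fin.sum_univ_three, RCLike.inner_apply, mul_comm]

lemma dot_comm (a b : E3) : dot a b = dot b a := by simp [dot]; ring
lemma dot_self_eq_norm_sq (a : E3) : dot a a = ‖a‖ ^ 2 := by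
  rw [dot_eq_inner, real_inner_self_eq_norm_sq]
lemma dot_add_left (a b c : E3) : dot (a + b) c = dot a c + dot b c := by simp [dot]; ring
lemma dot_add_right (a b c : E3) : dot a (b + c) = dot a b + dot a c := by simp [dot]; ring
lemma dot_sub_left (a b c : E3) : dot (a - b) c = dot a c - dot b c := by simp [dot]; ring
lemma dot_sub_right (a b c : E3) : dot a (b - c) = dot a b - dot a c := by simp [dot]; ring
lemma dot_smul_left (r : ℝ) (a b : E3) : dot (r • a) b = r * dot a b := by simp [dot]; ring
lemma dot_smul_right (r : ℝ) (a b : E3) : dot a (r • b) = r * dot a b := by simp [dot]; ring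
lemma dot_cross_left (b t : E3) : dot (cross b t) t = 0 := by simp [dot, cross]; ring
lemma dot_cross_right (b t : E3) : dot t (cross b t) = 0 := by simp [dot, cross]; ring
lemma dot_cross_fst (b t : E3) : dot b (cross b t) = 0 := by simp [dot, cross]; ring
lemma cross_triple (t b : E3) :
    cross t (cross b t) = (dot t t) • b - (dot t b) • t := by
  ext i
  fin_cases i <;> simp [dot, cross] <;> ring
lemma dot_cs (x y : E3) : dot x y ^ 2 ≤ dot x x * dot y y := by
  rw [dot_eq_inner, dot_eq_inner, dot_eq_inner, sq]
  exact real_inner_mul_inner_self_le x y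

lemma key_ineq (a t b : E3) (ht : t ≠ 0) (hc : cross b t ≠ 0) :
    (1/4) * |dot a (‖cross b t‖⁻¹ • cross b t)| ^ 2 * ‖t‖ ≤
      dot a ((1/2 : ℝ) • a + (‖t‖^4)⁻¹ • cross t (cross b t)) / 2 * ‖t‖ +
      dot ((-(dot a t/2) * ‖t‖⁻¹) • t + (-(dot t b * (‖t‖^3)⁻¹)) • t + ‖t‖⁻¹ • b)
        ((1/2 : ℝ) • a + (‖t‖^4)⁻¹ • cross t (cross b t)) := by
  set n : ℝ := ‖t‖ with hn
  have hn0 : 0 < n := norm_pos_iff.mpr ht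
  set c : E3 := cross b t with hcdef
  set m : ℝ := ‖c‖ with hm
  have hm0 : 0 < m := norm_pos_iff.mpr hc
  set P : E3 := (1/2 : ℝ) • a + (n^4)⁻¹ • cross t c with hP
  have htt : dot t t = n ^ 2 := dot_self_eq_norm_sq t
  have hcc : dot c c = m ^ 2 := dot_self_eq_norm_sq c
  have htc : dot t c = 0 := dot_cross_right b t
  have hκc : dot (cross t c) c = 0 := dot_cross_left t c
  have hκt : dot t (cross t c) = 0 := dot_cross_fst t c
  set B : ℝ := dot a t with hB
  set D : ℝ := dot t b with hD
  -- dot t P = B / 2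
  have htP : dot t P = B / 2 := by
    rw [hP, dot_add_right, dot_smul_right, dot_smul_right, hκt, dot_comm t a, ← hB]; ring
  -- dot P c = dot a c / 2
  have hPc : dot P c = dot a c / 2 := by
    rw [hP, dot_add_left, dot_smul_left, dot_smul_left, hκc]; ring
  -- dot b P in terms
  have htrip : cross t c = (n^2) • b - D • t := by
    rw [hD, ← htt]; exact cross_triple t b
  have hκP : dot (cross t c) P = n^2 * dot b P - D * (B/2) := by
    rw [htrip, dot_sub_left, dot_smul_left, dot_smul_left, htP]
  have hPP : dot P P = dot a P / 2 + (n^4)⁻¹ * (n^2 * dot b P - D * (B/2)) := by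
    rw [hP]
    nth_rewrite 1 [dot_add_left]
    rw [dot_smul_left, dot_smul_left, ← hP, hκP]
    ring
  -- orthogonal part
  set Pp : E3 := P - ((dot t P)/n^2) • t with hPp
  have hPpPp : dot Pp Pp = dot P P - (B/2)^2 / n^2 := by
    rw [hPp, dot_sub_left, dot_sub_right, dot_sub_right, dot_smul_left, dot_smul_right,
      dot_smul_left, dot_smul_right, htt, dot_comm P t, htP]
    field_simp
    ring
  have hPpc : dot Pp c = dot a c / 2 := by
    rw [hPp, dot_sub_left, dot_smul_left, htc, hPc]; ring
  -- Cauchy-Schwarz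
  have hcs : (dot a c / 2)^2 ≤ dot Pp Pp * m^2 := by
    calc (dot a c / 2)^2 = dot Pp c ^ 2 := by rw [hPpc]
    _ ≤ dot Pp Pp * dot c c := dot_cs Pp c
    _ = dot Pp Pp * m^2 := by rw [hcc]
  -- LHS rewriting
  have hL : (1/4) * |dot a (m⁻¹ • c)| ^ 2 * n = (dot a c / 2)^2 * (m^2)⁻¹ * n := by
    rw [dot_smul_right, sq_abs]; ring
  -- RHS equals n * dot Pp Pp
  have hR : dot a P / 2 * n +
      dot ((-(B/2) * n⁻¹) • t + (-(D * (n^3)⁻¹)) • t + n⁻¹ • b) P = n * dot Pp Pp := by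
    rw [dot_add_left, dot_add_left, dot_smul_left, dot_smul_left, dot_smul_left,
      htP, hPpPp, hPP]
    field_simp
    ring
  rw [hL, hR]
  have h1 : (dot a c / 2)^2 * (m^2)⁻¹ ≤ dot Pp Pp := by
    rw [← div_eq_mul_inv, div_le_iff₀ (by positivity : (0:ℝ) < m^2)]
    exact hcs
  have h2 := mul_le_mul_of_nonneg_right h1 hn0.le
  linarith

noncomputable section
variable {E : Type*} [NormedAddCommGroup E] [NormedSpace ℝ E]

lemma hasDerivAt_slice2 {f : ℝ × ℝ → E} (hf : ContDiff ℝ (⊤:ℕ∞) f) (τ x : ℝ) :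
    HasDerivAt (fun y => f (τ, y)) (fderiv ℝ f (τ, x) (0, 1)) x := by
  have h1 : HasDerivAt (fun y : ℝ => ((τ, y) : ℝ × ℝ)) ((0 : ℝ), (1 : ℝ)) x :=
    (hasDerivAt_const x τ).prodMk (hasDerivAt_id x)
  exact (hf.differentiable (by simp) (τ, x)).hasFDerivAt.comp_hasDerivAt x h1

lemma hasDerivAt_slice1 {f : ℝ × ℝ → E} (hf : ContDiff ℝ (⊤:ℕ∞) f) (τ x : ℝ) :
    HasDerivAt (fun s => f (s, x)) (fderiv ℝ f (τ, x) (1, 0)) τ := by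
  have h1 : HasDerivAt (fun s : ℝ => ((s, x) : ℝ × ℝ)) ((1 : ℝ), (0 : ℝ)) τ :=
    (hasDerivAt_id τ).prodMk (hasDerivAt_const τ x)
  exact (hf.differentiable (by simp) (τ, x)).hasFDerivAt.comp_hasDerivAt τ h1

lemma contDiff_fderiv_apply {f : ℝ × ℝ → E} (hf : ContDiff ℝ (⊤:ℕ∞) f) (w : ℝ × ℝ) :
    ContDiff ℝ (⊤:ℕ∞) (fun p => fderiv ℝ f p w) :=
  ((contDiff_infty_iff_fderiv.mp hf).2).clm_apply contDiff_const

lemma fderiv_fderiv_apply {f : ℝ × ℝ → E} (hf : ContDiff ℝ (⊤:ℕ∞) f) (p₀ : ℝ × ℝ) (e w : ℝ × ℝ) :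
    fderiv ℝ (fun p => fderiv ℝ f p e) p₀ w = fderiv ℝ (fderiv ℝ f) p₀ w e := by
  have hdf : DifferentiableAt ℝ (fderiv ℝ f) p₀ :=
    ((contDiff_infty_iff_fderiv.mp hf).2).differentiable (by simp) p₀
  have h : HasFDerivAt (fun p => fderiv ℝ f p e)
      ((ContinuousLinearMap.apply ℝ E e).comp (fderiv ℝ (fderiv ℝ f) p₀)) p₀ :=
    (ContinuousLinearMap.apply ℝ E e).hasFDerivAt.comp p₀ hdf.hasFDerivAt
  rw [h.fderiv]; rfl

lemma schwarz_mixed {f : ℝ × ℝ → E} (hf : ContDiff ℝ (⊤:ℕ∞) f) (p₀ : ℝ × ℝ) :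
    fderiv ℝ (fun p => fderiv ℝ f p (0, 1)) p₀ (1, 0) =
      fderiv ℝ (fun p => fderiv ℝ f p (1, 0)) p₀ (0, 1) := by
  rw [fderiv_fderiv_apply hf, fderiv_fderiv_apply hf]
  exact second_derivative_symmetric
    (fun y => (hf.differentiable (by simp) y).hasFDerivAt)
    (((contDiff_infty_iff_fderiv.mp hf).2).differentiable (by simp) p₀).hasFDerivAt (1,0) (0,1)

section helpers
variable {X : Type*} [NormedAddCommGroup X] [NormedSpace ℝ X]

lemma ContDiff.cross3 {f g : X → E3} (hf : ContDiff ℝ (⊤:ℕ∞) f) (hg : ContDiff ℝ (⊤:ℕ∞) g) :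
    ContDiff ℝ (⊤:ℕ∞) (fun x => cross (f x) (g x)) := by
  have hcomp : ∀ (h : X → E3) (i : Fin 3), ContDiff ℝ (⊤:ℕ∞) h →
      ContDiff ℝ (⊤:ℕ∞) (fun x => h x i) := fun h i hh => by
    simpa [Function.comp_def] using (EuclideanSpace.proj (𝕜 := ℝ) i).contDiff.comp hh
  have hm : ContDiff ℝ (⊤:ℕ∞) (fun x => (![f x 1 * g x 2 - f x 2 * g x 1,
      f x 2 * g x 0 - f x 0 * g x 2, f x 0 * g x 1 - f x 1 * g x 0] : Fin 3 → ℝ)) := by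
    apply contDiff_pi.mpr
    intro i
    fin_cases i <;> simp only [Matrix.cons_val_zero, Matrix.cons_val_one, Matrix.head_cons,
      Matrix.cons_val_two, Matrix.tail_cons, Matrix.cons_val_fin_one, Fin.isValue] <;>
      exact (((hcomp f _ hf).mul (hcomp g _ hg)).sub ((hcomp f _ hf).mul (hcomp g _ hg)))
  exact (PiLp.continuousLinearEquiv 2 ℝ (fun _ : Fin 3 => ℝ)).symm.contDiff.comp hm

lemma contDiff_norm_ne {f : X → E3} (hf : ContDiff ℝ (⊤:ℕ∞) f) (h0 : ∀ x, f x ≠ 0) :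
    ContDiff ℝ (⊤:ℕ∞) (fun x => ‖f x‖) :=
  contDiff_iff_contDiffAt.mpr fun x => hf.contDiffAt.norm ℝ (h0 x)

end helpers

lemma hasDerivAt_normsq3 {f : ℝ → E3} {f' : E3} {x : ℝ} (hf : HasDerivAt f f' x) :
    HasDerivAt (fun y => ‖f y‖ ^ 2) (2 * dot (f x) f') x := by
  have h := hf.inner ℝ hf
  have he : (fun y => ‖f y‖ ^ 2) = fun y => (inner ℝ (f y) (f y) : ℝ) :=
    funext fun y => (real_inner_self_eq_norm_sq _).symm
  have h2 : 2 * dot (f x) f' = inner ℝ (f x) f' + inner ℝ f' (f x) := by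
    rw [dot_eq_inner, real_inner_comm (f x) f']
    ring
  rw [he, h2]
  exact h

lemma hasDerivAt_norm3 {f : ℝ → E3} {f' : E3} {x : ℝ} (hf : HasDerivAt f f' x)
    (h0 : f x ≠ 0) :
    HasDerivAt (fun y => ‖f y‖) (dot (f x) f' / ‖f x‖) x := by
  have hne : ‖f x‖ ^ 2 ≠ 0 := pow_ne_zero 2 (norm_ne_zero_iff.mpr h0)
  have h2 := (hasDerivAt_normsq3 hf).sqrt hne
  have he : (fun y => ‖f y‖) = fun y => Real.sqrt (‖f y‖ ^ 2) :=
    funext fun y => (Real.sqrt_sq (norm_nonneg _)).symm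
  rw [he]
  convert h2 using 1
  rw [Real.sqrt_sq (norm_nonneg _)]
  have : ‖f x‖ ≠ 0 := norm_ne_zero_iff.mpr h0
  field_simp

/-! ### Joint functions along the flow -/

def Vj (v : ℝ → ℝ → E3) : ℝ × ℝ → E3 := fun p => v p.1 p.2
def Tj (v : ℝ → ℝ → E3) : ℝ × ℝ → E3 := fun p => deriv (v p.1) p.2
def Bj (v : ℝ → ℝ → E3) : ℝ × ℝ → E3 := fun p => deriv (deriv (v p.1)) p.2
def Pj (v : ℝ → ℝ → E3) : ℝ × ℝ → E3 := fun p =>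
  (1 / 2 : ℝ) • v p.1 p.2 +
    (‖Tj v p‖ ^ 4)⁻¹ • cross (Tj v p) (cross (Bj v p) (Tj v p))
def Qj (v : ℝ → ℝ → E3) : ℝ × ℝ → E3 := fun p => fderiv ℝ (Pj v) p (0, 1)
def ej (v : ℝ → ℝ → E3) : ℝ × ℝ → ℝ := fun p => Real.exp (-‖v p.1 p.2‖ ^ 2 / 4)
def Gj (v : ℝ → ℝ → E3) : ℝ × ℝ → ℝ := fun p =>
  ej v p * (-(2 * dot (v p.1 p.2) (Pj v p)) / 4) * ‖Tj v p‖ +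
    ej v p * (dot (Tj v p) (Qj v p) / ‖Tj v p‖)
def uj (v : ℝ → ℝ → E3) : ℝ × ℝ → E3 := fun p => (ej v p * ‖Tj v p‖⁻¹) • Tj v p
def wj (v : ℝ → ℝ → E3) : ℝ × ℝ → E3 := fun p =>
  (ej v p * ‖Tj v p‖⁻¹) • Bj v p +
    (ej v p * (-(2 * dot (v p.1 p.2) (Tj v p)) / 4) * ‖Tj v p‖⁻¹ +
      ej v p * (-(dot (Tj v p) (Bj v p) / ‖Tj v p‖) / ‖Tj v p‖ ^ 2)) • Tj v p

section vlemmas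
variable {v : ℝ → ℝ → E3}

lemma T_eq (hv : ContDiff ℝ (⊤:ℕ∞) (Vj v)) (p : ℝ × ℝ) :
    Tj v p = fderiv ℝ (Vj v) p (0, 1) :=
  (hasDerivAt_slice2 hv p.1 p.2).deriv

lemma cdT (hv : ContDiff ℝ (⊤:ℕ∞) (Vj v)) : ContDiff ℝ (⊤:ℕ∞) (Tj v) := by
  rw [show Tj v = fun p => fderiv ℝ (Vj v) p (0,1) from funext (T_eq hv)]
  exact contDiff_fderiv_apply hv _

lemma B_eq (hv : ContDiff ℝ (⊤:ℕ∞) (Vj v)) (p : ℝ × ℝ) :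
    Bj v p = fderiv ℝ (Tj v) p (0, 1) :=
  (hasDerivAt_slice2 (cdT hv) p.1 p.2).deriv

lemma cdB (hv : ContDiff ℝ (⊤:ℕ∞) (Vj v)) : ContDiff ℝ (⊤:ℕ∞) (Bj v) := by
  rw [show Bj v = fun p => fderiv ℝ (Tj v) p (0,1) from funext (B_eq hv)]
  exact contDiff_fderiv_apply (cdT hv) _

lemma cdP (hv : ContDiff ℝ (⊤:ℕ∞) (Vj v)) (hne : ∀ τ x, deriv (v τ) x ≠ 0) :
    ContDiff ℝ (⊤:ℕ∞) (Pj v) := by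
  have hTne : ∀ p : ℝ × ℝ, Tj v p ≠ 0 := fun p => hne p.1 p.2
  have hnrm : ContDiff ℝ (⊤:ℕ∞) (fun p => ‖Tj v p‖) := contDiff_norm_ne (cdT hv) hTne
  have hn4 : ContDiff ℝ (⊤:ℕ∞) (fun p => (‖Tj v p‖ ^ 4)⁻¹) :=
    (hnrm.pow 4).inv fun p => by
      have := norm_pos_iff.mpr (hTne p); positivity
  exact ((contDiff_const (c := (1 / 2 : ℝ))).smul hv).add
    (hn4.smul ((cdT hv).cross3 ((cdB hv).cross3 (cdT hv))))

lemma cdQ (hv : ContDiff ℝ (⊤:ℕ∞) (Vj v)) (hne : ∀ τ x, deriv (v τ) x ≠ 0) :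
    ContDiff ℝ (⊤:ℕ∞) (Qj v) :=
  contDiff_fderiv_apply (cdP hv hne) _

lemma F_eq (hv : ContDiff ℝ (⊤:ℕ∞) (Vj v))
    (hflow : ∀ τ x, deriv (fun s => v s x) τ =
      (1 / 2 : ℝ) • v τ x +
        (‖deriv (v τ) x‖ ^ 4)⁻¹ •
          cross (deriv (v τ) x)
            (cross (deriv (deriv (v τ)) x) (deriv (v τ) x))) (τ x : ℝ) :
    fderiv ℝ (Vj v) (τ, x) (1, 0) = Pj v (τ, x) := by
  rw [← (hasDerivAt_slice1 hv τ x).deriv]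
  exact hflow τ x

lemma mixed_eq (hv : ContDiff ℝ (⊤:ℕ∞) (Vj v))
    (hflow : ∀ τ x, deriv (fun s => v s x) τ =
      (1 / 2 : ℝ) • v τ x +
        (‖deriv (v τ) x‖ ^ 4)⁻¹ •
          cross (deriv (v τ) x)
            (cross (deriv (deriv (v τ)) x) (deriv (v τ) x))) (τ x : ℝ) :
    fderiv ℝ (Tj v) (τ, x) (1, 0) = Qj v (τ, x) := by
  rw [show Tj v = fun p => fderiv ℝ (Vj v) p (0,1) from funext (T_eq hv)]
  rw [schwarz_mixed hv (τ, x)]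
  rw [show (fun p : ℝ × ℝ => fderiv ℝ (Vj v) p (1,0)) = Pj v from
    funext fun p => F_eq hv hflow p.1 p.2]
  rfl

end vlemmas

section vlemmas2
variable {v : ℝ → ℝ → E3}

lemma hasDerivAt_G (hv : ContDiff ℝ (⊤:ℕ∞) (Vj v))
    (hne : ∀ τ x, deriv (v τ) x ≠ 0)
    (hflow : ∀ τ x, deriv (fun s => v s x) τ =
      (1 / 2 : ℝ) • v τ x +
        (‖deriv (v τ) x‖ ^ 4)⁻¹ •
          cross (deriv (v τ) x)
            (cross (deriv (deriv (v τ)) x) (deriv (v τ) x))) (τ x : ℝ) :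
    HasDerivAt (fun s => Real.exp (-‖v s x‖ ^ 2 / 4) * ‖deriv (v s) x‖)
      (Gj v (τ, x)) τ := by
  have hvder : HasDerivAt (fun s => v s x) (Pj v (τ, x)) τ := by
    have h := hasDerivAt_slice1 hv τ x
    rwa [F_eq hv hflow τ x] at h
  have hTder : HasDerivAt (fun s => deriv (v s) x) (Qj v (τ, x)) τ := by
    have h := hasDerivAt_slice1 (cdT hv) τ x
    rwa [mixed_eq hv hflow τ x] at h
  have he : HasDerivAt (fun s => Real.exp (-‖v s x‖ ^ 2 / 4))
      (Real.exp (-‖v τ x‖ ^ 2 / 4) * (-(2 * dot (v τ x) (Pj v (τ, x))) / 4)) τ :=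
    ((hasDerivAt_normsq3 hvder).neg.div_const 4).exp
  have hn : HasDerivAt (fun s => ‖deriv (v s) x‖)
      (dot (deriv (v τ) x) (Qj v (τ, x)) / ‖deriv (v τ) x‖) τ :=
    hasDerivAt_norm3 hTder (hne τ x)
  exact he.mul hn

lemma hasDerivAt_u (hv : ContDiff ℝ (⊤:ℕ∞) (Vj v))
    (hne : ∀ τ x, deriv (v τ) x ≠ 0) (τ x : ℝ) :
    HasDerivAt (fun y => uj v (τ, y)) (wj v (τ, x)) x := by
  have hvx : HasDerivAt (fun y => v τ y) (Tj v (τ, x)) x := by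
    have h := hasDerivAt_slice2 hv τ x
    rwa [← T_eq hv (τ, x)] at h
  have hTx : HasDerivAt (fun y => Tj v (τ, y)) (Bj v (τ, x)) x := by
    have h := hasDerivAt_slice2 (cdT hv) τ x
    rwa [← B_eq hv (τ, x)] at h
  have he : HasDerivAt (fun y => ej v (τ, y))
      (ej v (τ, x) * (-(2 * dot (v τ x) (Tj v (τ, x))) / 4)) x :=
    ((hasDerivAt_normsq3 hvx).neg.div_const 4).exp
  have hnrm : HasDerivAt (fun y => ‖Tj v (τ, y)‖)
      (dot (Tj v (τ, x)) (Bj v (τ, x)) / ‖Tj v (τ, x)‖) x :=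
    hasDerivAt_norm3 hTx (hne τ x)
  have hinv : HasDerivAt (fun y => ‖Tj v (τ, y)‖⁻¹)
      (-(dot (Tj v (τ, x)) (Bj v (τ, x)) / ‖Tj v (τ, x)‖) / ‖Tj v (τ, x)‖ ^ 2) x :=
    hnrm.inv (norm_ne_zero_iff.mpr (hne τ x))
  exact (he.mul hinv).smul hTx

lemma hasDerivAt_uP (hv : ContDiff ℝ (⊤:ℕ∞) (Vj v))
    (hne : ∀ τ x, deriv (v τ) x ≠ 0) (τ x : ℝ) :
    HasDerivAt (fun y => (inner ℝ (uj v (τ, y)) (Pj v (τ, y)) : ℝ))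
      ((inner ℝ (uj v (τ, x)) (Qj v (τ, x)) : ℝ) +
        (inner ℝ (wj v (τ, x)) (Pj v (τ, x)) : ℝ)) x := by
  have hP : HasDerivAt (fun y => Pj v (τ, y)) (Qj v (τ, x)) x :=
    hasDerivAt_slice2 (cdP hv hne) τ x
  exact (hasDerivAt_u hv hne τ x).inner ℝ hP

end vlemmas2

section cont
variable {X : Type*} [TopologicalSpace X]

lemma Continuous.dot3 {f g : X → E3} (hf : Continuous f) (hg : Continuous g) :
    Continuous fun x => dot (f x) (g x) := by
  have c : ∀ (h : X → E3) (i : Fin 3), Continuous h → Continuous fun x => h x i :=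
    fun h i hh => by
      simpa [Function.comp_def] using (EuclideanSpace.proj (𝕜 := ℝ) i).continuous.comp hh
  exact (((c f 0 hf).mul (c g 0 hg)).add ((c f 1 hf).mul (c g 1 hg))).add
    ((c f 2 hf).mul (c g 2 hg))

end cont

section vlemmas3
variable {v : ℝ → ℝ → E3}

lemma cont_ej (hv : ContDiff ℝ (⊤:ℕ∞) (Vj v)) : Continuous (ej v) :=
  Real.continuous_exp.comp ((((hv.continuous.norm).pow 2).neg).div_const 4)

lemma cont_Gj (hv : ContDiff ℝ (⊤:ℕ∞) (Vj v)) (hne : ∀ τ x, deriv (v τ) x ≠ 0)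
    (hflow : ∀ τ x, deriv (fun s => v s x) τ =
      (1 / 2 : ℝ) • v τ x +
        (‖deriv (v τ) x‖ ^ 4)⁻¹ •
          cross (deriv (v τ) x)
            (cross (deriv (deriv (v τ)) x) (deriv (v τ) x))) :
    Continuous (Gj v) := by
  have hT := (cdT hv).continuous
  have hP := (cdP hv hne).continuous
  have hQ := (cdQ hv hne).continuous
  have he := cont_ej hv
  have hnrm : Continuous fun p => ‖Tj v p‖ := hT.norm
  have hnne : ∀ p : ℝ × ℝ, ‖Tj v p‖ ≠ 0 := fun p => norm_ne_zero_iff.mpr (hne p.1 p.2)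
  exact ((he.mul ((continuous_const.mul (hv.continuous.dot3 hP)).neg.div_const 4)).mul hnrm).add
    (he.mul ((hT.dot3 hQ).div hnrm hnne))

lemma per_T (hper : ∀ τ x, v τ (x + 2 * Real.pi) = v τ x) (τ x : ℝ) :
    deriv (v τ) (x + 2 * Real.pi) = deriv (v τ) x := by
  have h1 : (fun y => v τ (y + 2 * Real.pi)) = v τ := funext fun y => hper τ y
  rw [← deriv_comp_add_const, h1]

lemma per_B (hper : ∀ τ x, v τ (x + 2 * Real.pi) = v τ x) (τ x : ℝ) :
    deriv (deriv (v τ)) (x + 2 * Real.pi) = deriv (deriv (v τ)) x := by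
  have h1 : (fun y => deriv (v τ) (y + 2 * Real.pi)) = deriv (v τ) :=
    funext fun y => per_T hper τ y
  rw [← deriv_comp_add_const, h1]

lemma per_P (hper : ∀ τ x, v τ (x + 2 * Real.pi) = v τ x) (τ x : ℝ) :
    Pj v (τ, x + 2 * Real.pi) = Pj v (τ, x) := by
  simp only [Pj, Tj, Bj]
  rw [hper τ x, per_T hper τ x, per_B hper τ x]

lemma per_uP (hper : ∀ τ x, v τ (x + 2 * Real.pi) = v τ x) (τ x : ℝ) :
    (inner ℝ (uj v (τ, x + 2 * Real.pi)) (Pj v (τ, x + 2 * Real.pi)) : ℝ) =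
      inner ℝ (uj v (τ, x)) (Pj v (τ, x)) := by
  simp only [uj, ej, Tj]
  rw [hper τ x, per_T hper τ x, per_P hper τ x]

end vlemmas3

/-- Standard basis vector. -/
def e3 (j : Fin 3) : E3 := EuclideanSpace.single j 1

/-- Corollary 2: Π(τ) ≤ −E'(τ) for the weighted length E and the binormal
defect Π along the rescaled flow. -/
theorem binormal_defect_bound (v : ℝ → ℝ → E3)
    (hsmooth : ContDiff ℝ (⊤ : ℕ∞) (fun p : ℝ × ℝ => v p.1 p.2))
    (hper : ∀ τ x, v τ (x + 2 * Real.pi) = v τ x)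
    (hne : ∀ τ x, deriv (v τ) x ≠ 0)
    (hne2 : ∀ τ x, cross (deriv (deriv (v τ)) x) (deriv (v τ) x) ≠ 0)
    (hflow : ∀ τ x, deriv (fun s => v s x) τ =
      (1 / 2 : ℝ) • v τ x +
        (‖deriv (v τ) x‖ ^ 4)⁻¹ •
          cross (deriv (v τ) x)
            (cross (deriv (deriv (v τ)) x) (deriv (v τ) x))) :
    ∀ τ : ℝ,
      (1 / 4) * (∫ x in (0 : ℝ)..(2 * Real.pi),
          |dot (v τ x)
            (‖cross (deriv (deriv (v τ)) x) (deriv (v τ) x)‖⁻¹ •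
              cross (deriv (deriv (v τ)) x) (deriv (v τ) x))| ^ 2 *
            (Real.exp (-‖v τ x‖ ^ 2 / 4) * ‖deriv (v τ) x‖)) ≤
      -deriv (fun s => ∫ x in (0 : ℝ)..(2 * Real.pi),
          Real.exp (-‖v s x‖ ^ 2 / 4) * ‖deriv (v s) x‖) τ := by
  intro τ
  have hv : ContDiff ℝ (⊤:ℕ∞) (Vj v) := hsmooth.of_le (by simp)
  have hTne : ∀ p : ℝ × ℝ, Tj v p ≠ 0 := fun p => hne p.1 p.2
  have hnne : ∀ p : ℝ × ℝ, ‖Tj v p‖ ≠ 0 := fun p => norm_ne_zero_iff.mpr (hTne p)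
  have hT := (cdT hv).continuous
  have hB := (cdB hv).continuous
  have hPc := (cdP hv hne).continuous
  have hQc := (cdQ hv hne).continuous
  have hec := cont_ej hv
  have hnrm : Continuous fun p => ‖Tj v p‖ := hT.norm
  have hGc := cont_Gj hv hne hflow
  -- Step 1: derivative of E
  have contF : Continuous fun p : ℝ × ℝ => ej v p * ‖Tj v p‖ := hec.mul hnrm
  obtain ⟨M, hM⟩ := (isCompact_Icc.prod (isCompact_uIcc (a := (0:ℝ)) (b := 2*Real.pi))
      : IsCompact ((Set.Icc (τ-1) (τ+1)) ×ˢ (Set.uIcc (0:ℝ) (2*Real.pi)))).exists_bound_of_continuousOn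
      hGc.continuousOn
  have hE : HasDerivAt (fun s => ∫ x in (0:ℝ)..(2*Real.pi),
      Real.exp (-‖v s x‖ ^ 2 / 4) * ‖deriv (v s) x‖)
      (∫ x in (0:ℝ)..(2*Real.pi), Gj v (τ, x)) τ := by
    have h := intervalIntegral.hasDerivAt_integral_of_dominated_loc_of_deriv_le
      (μ := volume) (F := fun s x => Real.exp (-‖v s x‖ ^ 2 / 4) * ‖deriv (v s) x‖)
      (F' := fun s x => Gj v (s, x)) (x₀ := τ) (a := 0) (b := 2*Real.pi)
      (bound := fun _ => M) (s := Metric.ball τ 1) (Metric.ball_mem_nhds τ one_pos)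
      (Filter.Eventually.of_forall fun s =>
        ((contF.comp (Continuous.prodMk_right s)).aestronglyMeasurable))
      (Continuous.intervalIntegrable (μ := volume) (contF.comp (Continuous.prodMk_right τ)) 0 (2*Real.pi))
      ((hGc.comp (Continuous.prodMk_right τ)).aestronglyMeasurable)
      (ae_of_all _ fun x hx s hs => by
        apply hM (s, x)
        constructor
        · have h1 := Metric.mem_ball.mp hs
          rw [Real.dist_eq] at h1
          have h2 := abs_lt.mp h1
          exact ⟨by linarith [h2.1], by linarith [h2.2]⟩
        · exact Set.uIoc_subset_uIcc hx)
      intervalIntegrable_const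
      (ae_of_all _ fun x hx s hs => hasDerivAt_G hv hne hflow s x)
    exact h.2
  rw [hE.deriv]
  -- Step 2: integration by parts
  have cont_uj : Continuous (uj v) := (hec.mul (hnrm.inv₀ hnne)).smul hT
  have cont_wj : Continuous (wj v) := by
    refine (((hec.mul (hnrm.inv₀ hnne)).smul hB).add (Continuous.fun_smul ?_ hT))
    refine ((hec.mul ((continuous_const.mul (hv.continuous.dot3 hT)).neg.div_const 4)).mul
      (hnrm.inv₀ hnne)).add (hec.mul (Continuous.div ((hT.dot3 hB).div hnrm hnne).neg
        (hnrm.pow 2) fun p => pow_ne_zero 2 (hnne p)))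
  have cont_uQ : Continuous fun x => (inner ℝ (uj v (τ, x)) (Qj v (τ, x)) : ℝ) :=
    (cont_uj.comp (Continuous.prodMk_right τ)).inner (hQc.comp (Continuous.prodMk_right τ))
  have cont_wP : Continuous fun x => (inner ℝ (wj v (τ, x)) (Pj v (τ, x)) : ℝ) :=
    (cont_wj.comp (Continuous.prodMk_right τ)).inner (hPc.comp (Continuous.prodMk_right τ))
  have int_uQ := Continuous.intervalIntegrable (μ := volume) cont_uQ 0 (2*Real.pi)
  have int_wP := Continuous.intervalIntegrable (μ := volume) cont_wP 0 (2*Real.pi)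
  have hftc : (∫ x in (0:ℝ)..(2*Real.pi),
      ((inner ℝ (uj v (τ, x)) (Qj v (τ, x)) : ℝ) + inner ℝ (wj v (τ, x)) (Pj v (τ, x)))) = 0 := by
    rw [intervalIntegral.integral_eq_sub_of_hasDerivAt
      (f := fun x => (inner ℝ (uj v (τ, x)) (Pj v (τ, x)) : ℝ))
      (fun x _ => hasDerivAt_uP hv hne τ x) (int_uQ.add int_wP)]
    rw [sub_eq_zero]
    have h := per_uP hper τ 0
    simpa using h
  have hswap : (∫ x in (0:ℝ)..(2*Real.pi), (inner ℝ (uj v (τ, x)) (Qj v (τ, x)) : ℝ)) =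
      -∫ x in (0:ℝ)..(2*Real.pi), (inner ℝ (wj v (τ, x)) (Pj v (τ, x)) : ℝ) := by
    rw [intervalIntegral.integral_add int_uQ int_wP] at hftc
    linarith
  -- Step 3: split Gj
  set A : ℝ → ℝ := fun x => ej v (τ, x) * (dot (v τ x) (Pj v (τ, x)) / 2) * ‖Tj v (τ, x)‖
    with hA
  have cont_A : Continuous A := by
    rw [hA]
    exact ((hec.comp (Continuous.prodMk_right τ)).mul
      (((hv.continuous.dot3 hPc).comp (Continuous.prodMk_right τ)).div_const 2)).mul
      (hnrm.comp (Continuous.prodMk_right τ))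
  have int_A := Continuous.intervalIntegrable (μ := volume) cont_A 0 (2*Real.pi)
  have hGsplit : ∀ x : ℝ, Gj v (τ, x) =
      -A x + (inner ℝ (uj v (τ, x)) (Qj v (τ, x)) : ℝ) := by
    intro x
    simp only [Gj, uj, hA]
    rw [real_inner_smul_left, ← dot_eq_inner]
    have h0 := hnne (τ, x)
    field_simp
    ring
  have hGint : (∫ x in (0:ℝ)..(2*Real.pi), Gj v (τ, x)) =
      (∫ x in (0:ℝ)..(2*Real.pi), -A x) +
        ∫ x in (0:ℝ)..(2*Real.pi), (inner ℝ (uj v (τ, x)) (Qj v (τ, x)) : ℝ) := by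
    rw [intervalIntegral.integral_congr (fun x _ => hGsplit x)]
    exact intervalIntegral.integral_add int_A.neg int_uQ
  have hfinal : -(∫ x in (0:ℝ)..(2*Real.pi), Gj v (τ, x)) =
      ∫ x in (0:ℝ)..(2*Real.pi),
        (A x + (inner ℝ (wj v (τ, x)) (Pj v (τ, x)) : ℝ)) := by
    rw [hGint, hswap, intervalIntegral.integral_neg, intervalIntegral.integral_add int_A int_wP]
    ring
  rw [hfinal]
  -- Step 4: pointwise inequality and monotonicity
  rw [← intervalIntegral.integral_const_mul]
  have cont_pi : Continuous fun x : ℝ => (1/4 : ℝ) *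
      (|dot (v τ x)
          (‖cross (deriv (deriv (v τ)) x) (deriv (v τ) x)‖⁻¹ •
            cross (deriv (deriv (v τ)) x) (deriv (v τ) x))| ^ 2 *
        (Real.exp (-‖v τ x‖ ^ 2 / 4) * ‖deriv (v τ) x‖)) := by
    have hcj : Continuous fun p : ℝ × ℝ => cross (Bj v p) (Tj v p) :=
      ((cdB hv).cross3 (cdT hv)).continuous
    have hcne : ∀ p : ℝ × ℝ, cross (Bj v p) (Tj v p) ≠ 0 := fun p => hne2 p.1 p.2
    have hγ : Continuous fun p : ℝ × ℝ =>
        ‖cross (Bj v p) (Tj v p)‖⁻¹ • cross (Bj v p) (Tj v p) :=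
      ((hcj.norm.inv₀ fun p => norm_ne_zero_iff.mpr (hcne p)).smul hcj)
    have : Continuous fun p : ℝ × ℝ =>
        (1/4 : ℝ) * (|dot (Vj v p) (‖cross (Bj v p) (Tj v p)‖⁻¹ •
          cross (Bj v p) (Tj v p))| ^ 2 * (ej v p * ‖Tj v p‖)) :=
      continuous_const.mul ((((hv.continuous.dot3 hγ).abs.pow 2)).mul contF)
    exact this.comp (Continuous.prodMk_right τ)
  apply intervalIntegral.integral_mono_on (by positivity)
    (cont_pi.intervalIntegrable 0 (2*Real.pi)) (int_A.add int_wP)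
  intro x hx
  -- pointwise inequality
  have key := key_ineq (v τ x) (deriv (v τ) x) (deriv (deriv (v τ)) x) (hne τ x) (hne2 τ x)
  have hepos : (0:ℝ) < ej v (τ, x) := Real.exp_pos _
  have hmul := mul_le_mul_of_nonneg_left key hepos.le
  have h0 : ‖Tj v (τ, x)‖ ≠ 0 := hnne (τ, x)
  have hw : (inner ℝ (wj v (τ, x)) (Pj v (τ, x)) : ℝ) =
      ej v (τ, x) * dot ((-(dot (v τ x) (deriv (v τ) x)/2) * ‖deriv (v τ) x‖⁻¹) • deriv (v τ) x +
        (-(dot (deriv (v τ) x) (deriv (deriv (v τ)) x) * (‖deriv (v τ) x‖^3)⁻¹)) • deriv (v τ) x +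
        ‖deriv (v τ) x‖⁻¹ • deriv (deriv (v τ)) x) (Pj v (τ, x)) := by
    simp only [wj]
    rw [inner_add_left, real_inner_smul_left, real_inner_smul_left,
      ← dot_eq_inner, ← dot_eq_inner]
    rw [dot_add_left, dot_add_left, dot_smul_left, dot_smul_left, dot_smul_left]
    simp only [Tj, Bj, ej]
    field_simp
    ring
  calc (1/4 : ℝ) * (|dot (v τ x)
        (‖cross (deriv (deriv (v τ)) x) (deriv (v τ) x)‖⁻¹ •
          cross (deriv (deriv (v τ)) x) (deriv (v τ) x))| ^ 2 *
        (Real.exp (-‖v τ x‖ ^ 2 / 4) * ‖deriv (v τ) x‖))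
      = ej v (τ, x) * ((1/4) * |dot (v τ x)
        (‖cross (deriv (deriv (v τ)) x) (deriv (v τ) x)‖⁻¹ •
          cross (deriv (deriv (v τ)) x) (deriv (v τ) x))| ^ 2 * ‖deriv (v τ) x‖) := by
        simp only [ej]; ring
    _ ≤ ej v (τ, x) * (dot (v τ x) ((1/2 : ℝ) • v τ x + (‖deriv (v τ) x‖^4)⁻¹ •
          cross (deriv (v τ) x) (cross (deriv (deriv (v τ)) x) (deriv (v τ) x))) / 2 *
          ‖deriv (v τ) x‖ +
        dot ((-(dot (v τ x) (deriv (v τ) x)/2) * ‖deriv (v τ) x‖⁻¹) • deriv (v τ) x +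
          (-(dot (deriv (v τ) x) (deriv (deriv (v τ)) x) * (‖deriv (v τ) x‖^3)⁻¹)) • deriv (v τ) x +
          ‖deriv (v τ) x‖⁻¹ • deriv (deriv (v τ)) x)
        ((1/2 : ℝ) • v τ x + (‖deriv (v τ) x‖^4)⁻¹ •
          cross (deriv (v τ) x) (cross (deriv (deriv (v τ)) x) (deriv (v τ) x)))) := hmul
    _ = A x + (inner ℝ (wj v (τ, x)) (Pj v (τ, x)) : ℝ) := by
        rw [hw, hA]
        simp only [Pj, Tj, Bj]
        ring
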